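/- Let n ≥ 2 be an integer and consider the sphere braid group B_{2n+1}(S²) on 2n+1 strands, presented over FreeGroup (Fin 2n). Let β_{1,n} be the image in B_{2n+1}(S²) of the word σ_1 σ_2 ⋯ σ_n · σ_{n+1} · σ_{n+2}⁻¹ ⋯ σ_{2n}⁻¹, and let δ be the image of σ_1 σ_2 ⋯ σ_{2n}. Then for every integer q, the element β_{1,n} is not conjugate in B_{2n+1}(S²) to δ^q. (The exponent sum of β_{1,n} is 2, while that of δ^q is 2nq, and 2 is not congruent to 2nq modulo 4n when n ≥ 2.) -/

import Mathlib

/-- The relators of the sphere braid group `B_l(S²)`. -/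
def sphereBraidRels (l : ℕ) : Set (FreeGroup (Fin (l - 1))) :=
  {r | (∃ i j : Fin (l - 1), 2 ≤ |(i : ℤ) - (j : ℤ)| ∧
          r = FreeGroup.of i * FreeGroup.of j * (FreeGroup.of i)⁻¹ * (FreeGroup.of j)⁻¹) ∨
       (∃ i j : Fin (l - 1), (i : ℕ) + 1 = (j : ℕ) ∧
          r = FreeGroup.of i * FreeGroup.of j * FreeGroup.of i *
              (FreeGroup.of j)⁻¹ * (FreeGroup.of i)⁻¹ * (FreeGroup.of j)⁻¹) ∨
       r = (List.ofFn fun i : Fin (l - 1) => FreeGroup.of i).prod *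
           ((List.ofFn fun i : Fin (l - 1) => FreeGroup.of i).reverse).prod}

/-- The word `σ_1 σ_2 ⋯ σ_n · σ_{n+1} · σ_{n+2}⁻¹ ⋯ σ_{2n}⁻¹` in the free group on the
`2n` generators of `B_{2n+1}(S²)` (the generator indexed by `i : Fin 2n` is `σ_{i+1}`). -/
def betaWord (n : ℕ) : FreeGroup (Fin (2 * n + 1 - 1)) :=
  (List.ofFn fun i : Fin (2 * n + 1 - 1) =>
      if (i : ℕ) ≤ n then FreeGroup.of i else (FreeGroup.of i)⁻¹).prod

/-- The word `σ_1 σ_2 ⋯ σ_{2n}`. -/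
def deltaWord (n : ℕ) : FreeGroup (Fin (2 * n + 1 - 1)) :=
  (List.ofFn fun i : Fin (2 * n + 1 - 1) => FreeGroup.of i).prod

/-!
The exponent sum vanishes on the commutation and braid relators and equals `2 (l - 1)` on the
full-twist relator, so modulo `2 (l - 1)` it descends to a homomorphism from `B_l(S²)` to an
abelian group, hence is a conjugacy invariant. For `l = 2n + 1` it is `2` on `β_{1,n}` and `2nq`
on `δ^q`, and `4n ∤ 2nq - 2` once `n ≥ 2`.
-/

open Multiplicative

namespace FreeGroup

variable {α : Type*}

def expSum : FreeGroup α →* Multiplicative ℤ :=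
  FreeGroup.lift fun _ => ofAdd 1

@[simp]
lemma toAdd_expSum_of (a : α) : toAdd (expSum (of a)) = 1 := by
  simp [expSum]

lemma lift_ofAdd_one_apply {R : Type*} [AddGroupWithOne R] (x : FreeGroup α) :
    FreeGroup.lift (fun _ => ofAdd (1 : R)) x = ofAdd ((toAdd (expSum x) : ℤ) : R) := by
  have : FreeGroup.lift (fun _ : α => ofAdd (1 : R)) =
      (Int.castAddHom R).toMultiplicative.comp expSum :=
    FreeGroup.ext_hom _ _ fun a => by simp [expSum]
  rw [this]
  rfl

lemma expSum_reverse_prod (l : List (FreeGroup α)) :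
    expSum l.reverse.prod = expSum l.prod := by
  rw [map_list_prod, map_list_prod, List.map_reverse, List.prod_reverse]

lemma toAdd_expSum_prod_ofFn_of (m : ℕ) :
    toAdd (expSum (List.ofFn fun i : Fin m => of i).prod) = m := by
  simp [map_list_prod, List.map_ofFn, List.prod_ofFn, toAdd_prod, Function.comp_def]

end FreeGroup

open FreeGroup (expSum)

lemma toAdd_expSum_mem_of_mem_sphereBraidRels {l : ℕ} {r : FreeGroup (Fin (l - 1))}
    (hr : r ∈ sphereBraidRels l) :
    toAdd (expSum r) = 0 ∨ toAdd (expSum r) = 2 * (l - 1 : ℕ) := by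
  rcases hr with ⟨i, j, -, rfl⟩ | ⟨i, j, -, rfl⟩ | rfl
  · left; simp
  · left; simp
  · right
    rw [map_mul, toAdd_mul, FreeGroup.expSum_reverse_prod, FreeGroup.toAdd_expSum_prod_ofFn_of]
    ring

def sphereBraidExpSumMod (l : ℕ) :
    PresentedGroup (sphereBraidRels l) →* Multiplicative (ZMod (2 * (l - 1))) :=
  PresentedGroup.toGroup (f := fun _ => ofAdd 1) fun r hr => by
    rw [FreeGroup.lift_ofAdd_one_apply, ofAdd_eq_one]
    rcases toAdd_expSum_mem_of_mem_sphereBraidRels hr with h | h <;> rw [h]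
    · exact Int.cast_zero
    · exact_mod_cast ZMod.natCast_self _

lemma sphereBraidExpSumMod_mk {l : ℕ} (x : FreeGroup (Fin (l - 1))) :
    sphereBraidExpSumMod l (PresentedGroup.mk _ x) = ofAdd ((toAdd (expSum x) : ℤ) : ZMod _) :=
  FreeGroup.lift_ofAdd_one_apply x

lemma toAdd_expSum_deltaWord (n : ℕ) : toAdd (expSum (deltaWord n)) = 2 * n := by
  rw [deltaWord, FreeGroup.toAdd_expSum_prod_ofFn_of]
  push_cast
  ring

lemma toAdd_expSum_betaWord {n : ℕ} (hn : 1 ≤ n) : toAdd (expSum (betaWord n)) = 2 := by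
  rw [betaWord, map_list_prod, List.map_ofFn, List.prod_ofFn, toAdd_prod]
  simp only [Function.comp_apply, apply_ite expSum, apply_ite toAdd, map_inv, toAdd_inv,
    FreeGroup.toAdd_expSum_of]
  rw [Fin.sum_univ_eq_sum_range (fun i => if i ≤ n then (1 : ℤ) else -1),
    show 2 * n + 1 - 1 = (n + 1) + (n - 1) by omega, Finset.sum_range_add]
  rw [Finset.sum_congr rfl (fun i hi => if_pos (by have := Finset.mem_range.mp hi; omega)),
    Finset.sum_congr rfl (fun i _ => if_neg (by omega))]
  simp only [Finset.sum_const, Finset.card_range, smul_neg, nsmul_one]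
  omega

lemma Int.not_dvd_mul_sub_two {m : ℤ} (hm : 2 < m) (q : ℤ) : ¬ m ∣ m * q - 2 := by
  intro h
  have : m ∣ 2 := by simpa using (dvd_mul_right m q).sub h
  have := Int.le_of_dvd two_pos this
  omega

theorem beta_one_n_not_conjugate_to_power_of_delta (n : ℕ) (hn : 2 ≤ n) (q : ℤ) :
    ¬ IsConj (PresentedGroup.mk (sphereBraidRels (2 * n + 1)) (betaWord n))
        ((PresentedGroup.mk (sphereBraidRels (2 * n + 1)) (deltaWord n)) ^ q) := by
  intro hconj
  have hsum := congrArg toAdd (isConj_iff_eq.mp ((sphereBraidExpSumMod _).map_isConj hconj))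
  simp only [map_zpow, sphereBraidExpSumMod_mk, toAdd_zpow, toAdd_ofAdd,
    toAdd_expSum_betaWord (by omega : 1 ≤ n), toAdd_expSum_deltaWord] at hsum
  rw [zsmul_eq_mul, ← Int.cast_mul, ZMod.intCast_eq_intCast_iff_dvd_sub] at hsum
  have hdvd : (2 * n : ℤ) ∣ 2 * n * q - 2 :=
    (dvd_mul_left _ 2).trans (by simpa [mul_comm] using hsum)
  exact Int.not_dvd_mul_sub_two (by omega) q hdvd
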